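/- arXiv:1710.03710 — 3 statements merged into one kernel-verified Lean document; each statement's English description precedes it below -/
import Mathlib

section
/- Let m be a positive integer, let T : ℝ^m → ℝ^m be a continuous map, and let x ∈ ℝ^m. If the orbit {T^n(x) : n ∈ ℕ} is a bounded set, then the limit set Ω(x) is invariantly connected: Ω(x) is closed, invariant, and is not the union of two nonempty disjoint closed invariant sets. -/
/-!
The limit set is the set of cluster points of the orbit, hence closed, and forward invariance
follows from continuity of `T`. For `Ω(x) ⊆ T(Ω(x))` one uses that the orbit lies in a compact
set, so a cluster point `y` of `n ↦ T^[n+1] x` lifts to a cluster point `z` of the orbit with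
`T z = y`.

If `Ω(x) = A ∪ B` with `A`, `B` nonempty, disjoint, closed and `T(A) ⊆ A`, separate the compact
sets `A` and `B` by disjoint open sets `U ⊇ A` and `V ⊇ B`. By compactness the orbit eventually
stays in `U ∪ V`, and it visits both `U` and `V` infinitely often, so infinitely often it jumps
from `U` straight into `V`. A cluster point `p` of these jump times lies in `closure U`, hence
in `A`, while `T p` lies in `closure V`, which is disjoint from `A ⊇ T(A)`.
-/

open Filter Topology Set

/-- The limit set of a point `x`: all `y` such that `T^[n_k] x → y` along some
sequence `n_k → ∞`. -/
def limitSetPt {α : Type*} [TopologicalSpace α] (T : α → α) (x : α) : Set α :=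
  {y | ∃ n : ℕ → ℕ, Tendsto n atTop atTop ∧
        Tendsto (fun k => T^[n k] x) atTop (𝓝 y)}

theorem Filter.frequently_and_succ_of_eventually_or {p q : ℕ → Prop}
    (hpq : ∀ᶠ n in atTop, p n ∨ q n) (hp : ∃ᶠ n in atTop, p n) (hq : ∃ᶠ n in atTop, q n) :
    ∃ᶠ n in atTop, p n ∧ q (n + 1) := by
  by_contra h
  obtain ⟨N, hN⟩ := eventually_atTop.1 ((not_frequently.1 h).and hpq)
  obtain ⟨n₀, hn₀N, hpn₀⟩ := frequently_atTop.1 hp N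
  have hp_eventually : ∀ n ≥ n₀, p n := by
    intro n hn
    induction n, hn using Nat.le_induction with
    | base => exact hpn₀
    | succ n hn ih =>
      exact (hN (n + 1) (by omega)).2.resolve_right fun hq => (hN n (by omega)).1 ⟨ih, hq⟩
  obtain ⟨n, hn, hqn⟩ := frequently_atTop.1 hq (n₀ + 1)
  obtain ⟨m, rfl⟩ : ∃ m, n = m + 1 := ⟨n - 1, by omega⟩
  exact (hN m (by omega)).1 ⟨hp_eventually m (by omega), hqn⟩

theorem IsCompact.exists_mapClusterPt_of_mapClusterPt_comp {ι X Y : Type*} [TopologicalSpace X]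
    [TopologicalSpace Y] [T2Space Y] {K : Set X} (hK : IsCompact K) {F : Filter ι}
    {u : ι → X} (hu : ∀ᶠ i in F, u i ∈ K) {g : X → Y} (hg : Continuous g) {y : Y}
    (hy : MapClusterPt y F (g ∘ u)) : ∃ z ∈ K, MapClusterPt z F u ∧ g z = y := by
  obtain ⟨𝒰, h𝒰F, h𝒰y⟩ := mapClusterPt_iff_ultrafilter.1 hy
  obtain ⟨z, hzK, hz⟩ := hK.ultrafilter_le_nhds (𝒰.map u) (le_principal_iff.2 (h𝒰F hu))
  exact ⟨z, hzK, (Tendsto.mapClusterPt (x := z) hz).mono h𝒰F,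
    tendsto_nhds_unique ((hg.tendsto z).comp hz) h𝒰y⟩

section LimitSet

variable {α : Type*} [TopologicalSpace α] {T : α → α} {x : α}

theorem mapClusterPt_comp_orbit_iff {y : α} :
    MapClusterPt y atTop (T ∘ fun n => T^[n] x) ↔ MapClusterPt y atTop fun n => T^[n] x := by
  have hshift : (T ∘ fun n => T^[n] x) = (fun n => T^[n] x) ∘ (· + 1) :=
    funext fun n => (Function.iterate_succ_apply' T n x).symm
  rw [hshift, mapClusterPt_comp, map_add_atTop_eq_nat]

variable [FirstCountableTopology α]

theorem limitSetPt_eq_setOf_mapClusterPt :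
    limitSetPt T x = {y | MapClusterPt y atTop fun n => T^[n] x} := by
  ext y
  constructor
  · rintro ⟨n, hn, hconv⟩
    exact MapClusterPt.of_comp hn hconv.mapClusterPt
  · intro h
    obtain ⟨ψ, hψ, hconv⟩ := h.tendsto_subseq
    exact ⟨ψ, hψ.tendsto_atTop, hconv⟩

theorem isClosed_limitSetPt : IsClosed (limitSetPt T x) := by
  rw [limitSetPt_eq_setOf_mapClusterPt]
  exact isClosed_setOfPred_clusterPt

variable (hT : Continuous T)
include hT

theorem image_limitSetPt_subset : T '' limitSetPt T x ⊆ limitSetPt T x := by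
  rw [limitSetPt_eq_setOf_mapClusterPt]
  rintro _ ⟨y, hy, rfl⟩
  exact mapClusterPt_comp_orbit_iff.1 (hy.tendsto_comp (hT.tendsto y))

variable {K : Set α} (hK : IsCompact K) (hxK : ∀ n, T^[n] x ∈ K)
include hK hxK

theorem limitSetPt_subset_image [T2Space α] : limitSetPt T x ⊆ T '' limitSetPt T x := by
  rw [limitSetPt_eq_setOf_mapClusterPt]
  intro y hy
  obtain ⟨z, -, hz, rfl⟩ := hK.exists_mapClusterPt_of_mapClusterPt_comp
    (Eventually.of_forall hxK) hT (mapClusterPt_comp_orbit_iff.2 hy)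
  exact ⟨z, hz, rfl⟩

theorem exists_mem_limitSetPt_mem_closure_of_frequently {U V : Set α}
    (h : ∃ᶠ n in atTop, T^[n] x ∈ U ∧ T^[n + 1] x ∈ V) :
    ∃ p ∈ limitSetPt T x, p ∈ closure U ∧ T p ∈ closure V := by
  set S := {n | T^[n] x ∈ U ∧ T^[n + 1] x ∈ V}
  have : NeBot (atTop ⊓ 𝓟 S) := frequently_mem_iff_neBot.1 h
  have hS : ∀ᶠ n in atTop ⊓ 𝓟 S, n ∈ S := mem_inf_of_right (mem_principal_self S)
  obtain ⟨p, -, hp⟩ := hK.exists_mapClusterPt (u := fun n => T^[n] x) (f := atTop ⊓ 𝓟 S)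
    (le_principal_iff.2 (mem_map.2 (univ_mem' hxK)))
  refine ⟨p, limitSetPt_eq_setOf_mapClusterPt.ge (hp.mono inf_le_left), ?_, ?_⟩
  · exact isClosed_closure.mem_of_mapClusterPt hp (hS.mono fun n hn => subset_closure hn.1)
  · refine isClosed_closure.mem_of_mapClusterPt (hp.tendsto_comp (hT.tendsto p)) ?_
    refine hS.mono fun n hn => subset_closure ?_
    simpa only [Function.comp_apply, ← Function.iterate_succ_apply' T n x] using hn.2

theorem limitSetPt_ne_union [T2Space α] {A B : Set α} (hA : A.Nonempty) (hB : B.Nonempty)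
    (hAB : Disjoint A B) (hAc : IsClosed A) (hBc : IsClosed B) (hTA : MapsTo T A A) :
    limitSetPt T x ≠ A ∪ B := by
  intro hΩ
  have hΩK : limitSetPt T x ⊆ K := by
    rintro y ⟨n, -, hconv⟩
    exact hK.isClosed.mem_of_tendsto hconv (Eventually.of_forall fun k => hxK (n k))
  have hAK : A ⊆ K := subset_union_left.trans (hΩ ▸ hΩK)
  have hBK : B ⊆ K := subset_union_right.trans (hΩ ▸ hΩK)
  obtain ⟨U, V, hU, hV, hAU, hBV, hUV⟩ := SeparatedNhds.of_isCompact_isCompact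
    (hK.of_isClosed_subset hAc hAK) (hK.of_isClosed_subset hBc hBK) hAB
  rw [limitSetPt_eq_setOf_mapClusterPt] at hΩ
  have hΩUV : ∀ y, MapClusterPt y atTop (fun n => T^[n] x) → y ∈ U ∪ V := fun y hy =>
    union_subset_union hAU hBV (hΩ.le hy)
  have hev : ∀ᶠ n in atTop, T^[n] x ∈ U ∪ V :=
    hK.tendsto_nhdsSet_of_mapClusterPt (Eventually.of_forall hxK) (fun y _ => hΩUV y)
      ((hU.union hV).mem_nhdsSet.2 subset_rfl)
  obtain ⟨a, ha⟩ := hA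
  obtain ⟨b, hb⟩ := hB
  have hfreqU := (hΩ.ge (Or.inl ha) : MapClusterPt a _ _).frequently (hU.mem_nhds (hAU ha))
  have hfreqV := (hΩ.ge (Or.inr hb) : MapClusterPt b _ _).frequently (hV.mem_nhds (hBV hb))
  obtain ⟨p, hpΩ, hpU, hTpV⟩ := exists_mem_limitSetPt_mem_closure_of_frequently hT hK hxK
    (frequently_and_succ_of_eventually_or hev hfreqU hfreqV)
  rw [limitSetPt_eq_setOf_mapClusterPt, hΩ] at hpΩ
  have hpA : p ∈ A :=
    hpΩ.resolve_right fun hpB => (hUV.closure_left hV).ne_of_mem hpU (hBV hpB) rfl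
  exact (hUV.closure_right hU).ne_of_mem (hAU (hTA hpA)) hTpV rfl

end LimitSet

theorem limitSetPt_invariantly_connected_of_bounded_orbit_general
    (m : ℕ)
    (T : EuclideanSpace ℝ (Fin m) → EuclideanSpace ℝ (Fin m)) (hT : Continuous T)
    (x : EuclideanSpace ℝ (Fin m))
    (hbdd : Bornology.IsBounded {y | ∃ n : ℕ, y = T^[n] x}) :
    IsClosed (limitSetPt T x) ∧ T '' limitSetPt T x = limitSetPt T x ∧
      ¬ ∃ A B : Set (EuclideanSpace ℝ (Fin m)), A.Nonempty ∧ B.Nonempty ∧ Disjoint A B ∧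
        IsClosed A ∧ IsClosed B ∧ T '' A = A ∧ T '' B = B ∧ limitSetPt T x = A ∪ B := by
  have hK := hbdd.isCompact_closure
  have hxK : ∀ n, T^[n] x ∈ closure {y | ∃ n : ℕ, y = T^[n] x} :=
    fun n => subset_closure ⟨n, rfl⟩
  refine ⟨isClosed_limitSetPt, (image_limitSetPt_subset hT).antisymm
    (limitSetPt_subset_image hT hK hxK), ?_⟩
  rintro ⟨A, B, hA, hB, hAB, hAc, hBc, hTA, -, hΩ⟩
  exact limitSetPt_ne_union hT hK hxK hA hB hAB hAc hBc
    (mapsTo_iff_image_subset.2 hTA.le) hΩ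

theorem limitSetPt_invariantly_connected_of_bounded_orbit
    (m : ℕ) (hm : 0 < m)
    (T : EuclideanSpace ℝ (Fin m) → EuclideanSpace ℝ (Fin m)) (hT : Continuous T)
    (x : EuclideanSpace ℝ (Fin m))
    (hbdd : Bornology.IsBounded {y | ∃ n : ℕ, y = T^[n] x}) :
    IsClosed (limitSetPt T x) ∧ T '' limitSetPt T x = limitSetPt T x ∧
      ¬ ∃ A B : Set (EuclideanSpace ℝ (Fin m)), A.Nonempty ∧ B.Nonempty ∧ Disjoint A B ∧
        IsClosed A ∧ IsClosed B ∧ T '' A = A ∧ T '' B = B ∧ limitSetPt T x = A ∪ B :=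
  limitSetPt_invariantly_connected_of_bounded_orbit_general m T hT x hbdd
end

section
/- (Discrete-time LaSalle invariance principle) Let m be a positive integer, let G ⊆ ℝ^m, and let T : ℝ^m → ℝ^m be continuous on the closure of G. Suppose V : ℝ^m → ℝ satisfies: (i) V is continuous on the closure of G; (ii) V(T(x)) − V(x) ≤ 0 for all x ∈ G. Let x_0 ∈ G and define x(n) = T^n(x_0). If the set ⋃_{n=0}^{∞} {x(n)} is bounded and x(n) ∈ G for all n ∈ ℕ, then there exists c ∈ ℝ such that dist(x(n), M ∩ V^{-1}(c)) → 0 as n → ∞, where V^{-1}(c) = {x ∈ ℝ^m : V(x) = c}, E = {x ∈ closure(G) : V(T(x)) − V(x) = 0}, and M is the largest invariant set of T contained in E. -/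
/-!
The ω-limit set `ω` of the orbit is nonempty and attracts the orbit, because the orbit stays in a
compact set. Along the orbit `V` decreases, so `V (T^[n] x₀)` converges to some `c`; continuity
then forces `V = c` on `ω`. Continuity of `T` on the closed set containing the orbit makes `ω`
invariant (`T '' ω ⊆ ω` by passing to the limit in `T^[n+1] x₀ = T (T^[n] x₀)`, and `ω ⊆ T '' ω`
by a compactness argument on the predecessors). Hence `ω ⊆ E`, so `ω ⊆ M ∩ V⁻¹(c)`, and the orbit
approaches this larger set as well.
-/

open Filter Topology Set Metric

theorem MapClusterPt.eq_of_tendsto {α X : Type*} [TopologicalSpace X] [T2Space X]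
    {F : Filter α} {u : α → X} {a b : X} (ha : MapClusterPt a F u) (hb : Tendsto u F (𝓝 b)) :
    a = b :=
  eq_of_nhds_neBot (ha.clusterPt.mono hb)

theorem MapClusterPt.comp_of_continuousWithinAt {α X Y : Type*} [TopologicalSpace X]
    [TopologicalSpace Y] {F : Filter α} {u : α → X} {a : X} {s : Set X} {f : X → Y}
    (ha : MapClusterPt a F u) (hf : ContinuousWithinAt f s a) (hs : ∀ᶠ i in F, u i ∈ s) :
    MapClusterPt (f a) F (f ∘ u) :=
  ha.tendsto_comp' (hf.mono_left (inf_le_inf_left _ (le_principal_iff.2 hs)))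

theorem exists_tendsto_of_antitone_of_isCompact {X : Type*} [TopologicalSpace X] {K : Set X}
    {V : X → ℝ} {u : ℕ → X} (hK : IsCompact K) (hV : ContinuousOn V K) (hu : ∀ n, u n ∈ K)
    (hanti : Antitone (V ∘ u)) : ∃ c, Tendsto (V ∘ u) atTop (𝓝 c) :=
  ⟨_, tendsto_atTop_ciInf hanti <| (hK.image_of_continuousOn hV).bddBelow.mono <|
    range_subset_iff.2 fun n => mem_image_of_mem V (hu n)⟩

section Orbit

variable {X : Type*} [TopologicalSpace X] {T : X → X} {x₀ : X} {S K : Set X}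

local notation "ω⁺" => omegaLimit atTop (fun n x => T^[n] x) (singleton x₀ : Set X)

theorem mem_omegaLimit_orbit_iff {y : X} :
    y ∈ ω⁺ ↔ MapClusterPt y atTop (fun n => T^[n] x₀) :=
  mem_omegaLimit_singleton_iff_mapClusterPt _ _ _ _

theorem mapClusterPt_orbit_succ_iff {y : X} :
    MapClusterPt y atTop (fun n => T^[n + 1] x₀) ↔ MapClusterPt y atTop (fun n => T^[n] x₀) := by
  change MapClusterPt y atTop ((fun n => T^[n] x₀) ∘ (· + 1)) ↔ _
  rw [mapClusterPt_comp, map_add_atTop_eq_nat]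

theorem omegaLimit_orbit_subset (hS : IsClosed S) (horbit : ∀ n, T^[n] x₀ ∈ S) : ω⁺ ⊆ S :=
  fun _ hy => hS.mem_of_mapClusterPt (mem_omegaLimit_orbit_iff.1 hy) (.of_forall horbit)

theorem omegaLimit_orbit_nonempty [T2Space X] (hK : IsCompact K) (horbit : ∀ n, T^[n] x₀ ∈ K) :
    ω⁺.Nonempty :=
  nonempty_omegaLimit_of_isCompact_absorbing _ _ _ hK
    ⟨univ, univ_mem, closure_minimal
      (by simpa [image2_singleton_right] using range_subset_iff.2 horbit) hK.isClosed⟩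
    (singleton_nonempty x₀)

theorem mapsTo_omegaLimit_orbit (hS : IsClosed S) (hT : ContinuousOn T S)
    (horbit : ∀ n, T^[n] x₀ ∈ S) : MapsTo T ω⁺ ω⁺ := fun y hy => by
  have hTy := (mem_omegaLimit_orbit_iff.1 hy).comp_of_continuousWithinAt
    (hT y (omegaLimit_orbit_subset hS horbit hy))
    (.of_forall horbit)
  simp only [Function.comp_def, ← Function.iterate_succ_apply' T] at hTy
  exact mem_omegaLimit_orbit_iff.2 (mapClusterPt_orbit_succ_iff.1 hTy)

theorem omegaLimit_orbit_subset_image [T2Space X] (hS : IsClosed S) (hT : ContinuousOn T S)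
    (horbit : ∀ n, T^[n] x₀ ∈ S) (hK : IsCompact K) (horbitK : ∀ n, T^[n] x₀ ∈ K) :
    ω⁺ ⊆ T '' ω⁺ := fun y hy => by
  -- `F` localises the times `n` at which `T^[n+1] x₀` is close to `y`; a cluster point `z` of
  -- `T^[n] x₀` along `F` is then a preimage of `y`.
  set F := comap (fun n => T^[n + 1] x₀) (𝓝 y) ⊓ atTop
  have : F.NeBot := neBot_inf_comap_iff_map'.2
    (mapClusterPt_orbit_succ_iff.2 (mem_omegaLimit_orbit_iff.1 hy))
  have hFK : map (fun n => T^[n] x₀) F ≤ 𝓟 K :=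
    le_principal_iff.2 (mem_map.2 (mem_inf_of_right (Eventually.of_forall horbitK)))
  obtain ⟨z, -, hz : MapClusterPt z F (fun n => T^[n] x₀)⟩ := hK hFK
  have hzω : z ∈ ω⁺ := mem_omegaLimit_orbit_iff.2 (hz.mono inf_le_right)
  refine ⟨z, hzω, ?_⟩
  have hTz := hz.comp_of_continuousWithinAt (hT z (omegaLimit_orbit_subset hS horbit hzω))
    (.of_forall horbit)
  simp only [Function.comp_def, ← Function.iterate_succ_apply' T] at hTz
  exact hTz.eq_of_tendsto (tendsto_comap.mono_left inf_le_left)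

theorem image_omegaLimit_orbit [T2Space X] (hS : IsClosed S) (hT : ContinuousOn T S)
    (horbit : ∀ n, T^[n] x₀ ∈ S) (hK : IsCompact K) (horbitK : ∀ n, T^[n] x₀ ∈ K) :
    T '' ω⁺ = ω⁺ :=
  (mapsTo_omegaLimit_orbit hS hT horbit).image_subset.antisymm
    (omegaLimit_orbit_subset_image hS hT horbit hK horbitK)

theorem eq_of_mem_omegaLimit_orbit {Y : Type*} [TopologicalSpace Y] [T2Space Y] {V : X → Y}
    {c : Y} (hS : IsClosed S) (hV : ContinuousOn V S) (horbit : ∀ n, T^[n] x₀ ∈ S)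
    (hc : Tendsto (fun n => V (T^[n] x₀)) atTop (𝓝 c)) {y : X} (hy : y ∈ ω⁺) : V y = c :=
  ((mem_omegaLimit_orbit_iff.1 hy).comp_of_continuousWithinAt
    (hV y (omegaLimit_orbit_subset hS horbit hy)) (.of_forall horbit)).eq_of_tendsto hc

end Orbit

theorem tendsto_infDist_omegaLimit_orbit {X : Type*} [MetricSpace X] {T : X → X} {x₀ : X}
    {K : Set X} (hK : IsCompact K) (horbitK : ∀ n, T^[n] x₀ ∈ K) :
    Tendsto (fun n => infDist (T^[n] x₀) (omegaLimit atTop (fun n x => T^[n] x) {x₀})) atTop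
      (𝓝 0) := by
  refine tendsto_order.2 ⟨fun a ha => .of_forall fun n => ha.trans_le infDist_nonneg,
    fun ε hε => ?_⟩
  filter_upwards [eventually_mapsTo_of_isCompact_absorbing_of_isOpen_of_omegaLimit_subset _ _ _ hK
    (.of_forall fun n => mapsTo_singleton.2 (horbitK n)) isOpen_thickening
    (self_subset_thickening hε _)] with n hn
  exact (mem_thickening_iff_infDist_lt (omegaLimit_orbit_nonempty hK horbitK)).1
    (hn (mem_singleton x₀))

theorem discrete_time_LaSalle_invariance_principle_general
    (m : ℕ)
    (G : Set (EuclideanSpace ℝ (Fin m)))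
    (T : EuclideanSpace ℝ (Fin m) → EuclideanSpace ℝ (Fin m))
    (hT : ContinuousOn T (closure G))
    (V : EuclideanSpace ℝ (Fin m) → ℝ) (hV : ContinuousOn V (closure G))
    (hdec : ∀ x ∈ G, V (T x) - V x ≤ 0)
    (x₀ : EuclideanSpace ℝ (Fin m))
    (hbdd : Bornology.IsBounded (⋃ n : ℕ, {T^[n] x₀}))
    (horbit : ∀ n : ℕ, T^[n] x₀ ∈ G) :
    ∃ c : ℝ, Tendsto
      (fun n : ℕ => Metric.infDist (T^[n] x₀)
        ((⋃₀ {A : Set (EuclideanSpace ℝ (Fin m)) |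
            A ⊆ {x ∈ closure G | V (T x) - V x = 0} ∧ T '' A = A}) ∩
          {x | V x = c}))
      atTop (𝓝 0) := by
  set K := closure (range fun n => T^[n] x₀)
  have hK : IsCompact K := by
    rw [iUnion_singleton_eq_range] at hbdd
    exact hbdd.isCompact_closure
  have horbitK : ∀ n, T^[n] x₀ ∈ K := fun n => subset_closure (mem_range_self n)
  have horbitG : ∀ n, T^[n] x₀ ∈ closure G := fun n => subset_closure (horbit n)
  obtain ⟨c, hc⟩ := exists_tendsto_of_antitone_of_isCompact hK
    (hV.mono (closure_mono (range_subset_iff.2 horbit))) horbitK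
    (antitone_nat_of_succ_le fun n => by
      simpa [Function.iterate_succ_apply'] using hdec _ (horbit n))
  set ω := omegaLimit atTop (fun n x => T^[n] x) {x₀}
  have hVω : ∀ y ∈ ω, V y = c := fun y =>
    eq_of_mem_omegaLimit_orbit isClosed_closure hV horbitG hc
  have hωE : ω ⊆ {x ∈ closure G | V (T x) - V x = 0} := fun y hy =>
    ⟨omegaLimit_orbit_subset isClosed_closure horbitG hy, by
      rw [hVω _ (mapsTo_omegaLimit_orbit isClosed_closure hT horbitG hy), hVω y hy, sub_self]⟩
  have hωM : ω ⊆ (⋃₀ {A | A ⊆ {x ∈ closure G | V (T x) - V x = 0} ∧ T '' A = A}) ∩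
      {x | V x = c} := fun y hy =>
    ⟨mem_sUnion_of_mem hy ⟨hωE, image_omegaLimit_orbit isClosed_closure hT horbitG hK horbitK⟩,
      hVω y hy⟩
  exact ⟨c, squeeze_zero (fun _ => infDist_nonneg)
    (fun n => infDist_le_infDist_of_subset hωM (omegaLimit_orbit_nonempty hK horbitK))
    (tendsto_infDist_omegaLimit_orbit hK horbitK)⟩

/-- Discrete-time LaSalle invariance principle. -/
theorem discrete_time_LaSalle_invariance_principle
    (m : ℕ) (hm : 0 < m)
    (G : Set (EuclideanSpace ℝ (Fin m)))
    (T : EuclideanSpace ℝ (Fin m) → EuclideanSpace ℝ (Fin m))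
    (hT : ContinuousOn T (closure G))
    (V : EuclideanSpace ℝ (Fin m) → ℝ) (hV : ContinuousOn V (closure G))
    (hdec : ∀ x ∈ G, V (T x) - V x ≤ 0)
    (x₀ : EuclideanSpace ℝ (Fin m)) (hx₀ : x₀ ∈ G)
    (hbdd : Bornology.IsBounded (⋃ n : ℕ, {T^[n] x₀}))
    (horbit : ∀ n : ℕ, T^[n] x₀ ∈ G) :
    ∃ c : ℝ, Tendsto
      (fun n : ℕ => Metric.infDist (T^[n] x₀)
        ((⋃₀ {A : Set (EuclideanSpace ℝ (Fin m)) |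
            A ⊆ {x ∈ closure G | V (T x) - V x = 0} ∧ T '' A = A}) ∩
          {x | V x = c}))
      atTop (𝓝 0) :=
  discrete_time_LaSalle_invariance_principle_general m G T hT V hV hdec x₀ hbdd horbit
end

section
/- (Extension of the LaSalle invariance principle) Let m be a positive integer, let G ⊆ ℝ^m, and let T : ℝ^m → ℝ^m be continuous on G. Suppose V : ℝ^m → ℝ satisfies: (i) V is continuous on G; (ii) V(T(x)) − V(x) ≤ 0 for all x ∈ G. Let x_0 ∈ G, define x(n) = T^n(x_0), and suppose there exist a compact set G_c ⊆ G and N ∈ ℕ such that x(n) ∈ G_c for all n ≥ N. Then there exists c ∈ ℝ such that dist(x(n), M ∩ V^{-1}(c)) → 0 as n → ∞, where V^{-1}(c) = {x ∈ ℝ^m : V(x) = c}, E = {x ∈ G_c : V(T(x)) − V(x) = 0}, and M is the largest invariant set of T contained in E. -/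
/-! The orbit eventually stays in the compact set `Gc`, so its ω-limit set is nonempty and
attracts it. Continuity of `T` on `Gc` makes the ω-limit set invariant: `T` carries cluster points
of the orbit to cluster points of the shifted orbit and, by compactness again, every cluster point
of the shifted orbit arises this way. Along the orbit `V` is eventually nonincreasing and bounded
below, hence tends to some `c`, and by continuity `V = c` on the ω-limit set. So `V ∘ T - V`
vanishes there, and the ω-limit set is an invariant subset of `E ∩ V⁻¹(c)`. -/

open Filter Topology Set Metric omegaLimit

theorem MapClusterPt.continuousWithinAt_comp {ι X Y : Type*} [TopologicalSpace X]
    [TopologicalSpace Y] {F : Filter ι} {u : ι → X} {s : Set X} {x : X} {g : X → Y}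
    (hu : MapClusterPt x F u) (hs : ∀ᶠ i in F, u i ∈ s) (hg : ContinuousWithinAt g s x) :
    MapClusterPt (g x) F (g ∘ u) :=
  hu.tendsto_comp' (hg.mono_left (inf_le_inf_left _ (tendsto_principal.2 hs)))

theorem MapClusterPt.eq_of_continuousWithinAt_of_tendsto_comp {ι X Y : Type*}
    [TopologicalSpace X] [TopologicalSpace Y] [T2Space Y] {F : Filter ι} {u : ι → X}
    {s : Set X} {x : X} {g : X → Y} {y : Y} (hu : MapClusterPt x F u)
    (hs : ∀ᶠ i in F, u i ∈ s) (hg : ContinuousWithinAt g s x) (h : Tendsto (g ∘ u) F (𝓝 y)) :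
    g x = y :=
  eq_of_nhds_neBot ((hu.continuousWithinAt_comp hs hg).clusterPt.mono h)

theorem Metric.tendsto_infDist_zero_of_tendsto_nhdsSet {ι X : Type*} [PseudoMetricSpace X]
    {l : Filter ι} {f : ι → X} {s : Set X} (hs : s.Nonempty) (h : Tendsto f l (𝓝ˢ s)) :
    Tendsto (fun i => infDist (f i) s) l (𝓝 0) := by
  refine Metric.tendsto_nhds.2 fun ε hε =>
    (h.eventually_mem (thickening_mem_nhdsSet s hε)).mono fun i hi => ?_
  rw [Real.dist_0_eq_abs, abs_of_nonneg infDist_nonneg]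
  exact (mem_thickening_iff_infDist_lt hs).1 hi

theorem Function.comp_iterate_apply_eq_comp_succ {X : Type*} (T : X → X) (x : X) :
    T ∘ (fun n => T^[n] x) = (fun n => T^[n] x) ∘ (· + 1) :=
  funext fun n => (Function.iterate_succ_apply' T n x).symm

section Iterate

variable {X : Type*} [TopologicalSpace X] {T : X → X} {K : Set X} {x₀ : X}

theorem omegaLimit_iterate_subset (hK : IsClosed K) (horbit : ∀ᶠ n in atTop, T^[n] x₀ ∈ K) :
    ω⁺ (fun n => T^[n]) {x₀} ⊆ K := fun _ hy =>
  hK.mem_of_mapClusterPt ((mem_omegaLimit_singleton_iff_mapClusterPt _ _ _ _).1 hy) horbit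

theorem mapsTo_omegaLimit_iterate (hK : IsClosed K) (horbit : ∀ᶠ n in atTop, T^[n] x₀ ∈ K)
    (hT : ContinuousOn T K) :
    MapsTo T (ω⁺ (fun n => T^[n]) {x₀}) (ω⁺ (fun n => T^[n]) {x₀}) := by
  intro y hy
  have hyK := omegaLimit_iterate_subset hK horbit hy
  rw [mem_omegaLimit_singleton_iff_mapClusterPt] at hy ⊢
  have hTy := hy.continuousWithinAt_comp horbit (hT y hyK)
  rw [Function.comp_iterate_apply_eq_comp_succ] at hTy
  exact hTy.of_comp (tendsto_add_atTop_nat 1)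

theorem omegaLimit_iterate_subset_image [T2Space X] (hK : IsCompact K)
    (horbit : ∀ᶠ n in atTop, T^[n] x₀ ∈ K) (hT : ContinuousOn T K) :
    ω⁺ (fun n => T^[n]) {x₀} ⊆ T '' ω⁺ (fun n => T^[n]) {x₀} := by
  intro y hy
  rw [mem_omegaLimit_singleton_iff_mapClusterPt] at hy
  set u : ℕ → X := fun n => T^[n] x₀
  -- along `l`, the shifted orbit `T ∘ u` converges to `y`; a cluster point `z` of `u` along `l`
  -- is then a preimage of `y`
  set l := atTop ⊓ comap (T ∘ u) (𝓝 y)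
  have hl : NeBot l := by
    rw [← map_neBot_iff (T ∘ u), Filter.push_pull, inf_comm,
      Function.comp_iterate_apply_eq_comp_succ]
    exact mapClusterPt_comp.2 (by rwa [map_add_atTop_eq_nat])
  have hlK : ∀ᶠ n in l, u n ∈ K := horbit.filter_mono inf_le_left
  obtain ⟨z, hzK, hz⟩ := hK.exists_mapClusterPt (tendsto_principal.2 hlK)
  refine ⟨z, (mem_omegaLimit_singleton_iff_mapClusterPt _ _ _ _).2 (hz.mono inf_le_left), ?_⟩
  exact hz.eq_of_continuousWithinAt_of_tendsto_comp hlK (hT z hzK)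
    (tendsto_comap.mono_left inf_le_right)

theorem image_omegaLimit_iterate [T2Space X] (hK : IsCompact K)
    (horbit : ∀ᶠ n in atTop, T^[n] x₀ ∈ K) (hT : ContinuousOn T K) :
    T '' ω⁺ (fun n => T^[n]) {x₀} = ω⁺ (fun n => T^[n]) {x₀} :=
  (mapsTo_omegaLimit_iterate hK.isClosed horbit hT).image_subset.antisymm
    (omegaLimit_iterate_subset_image hK horbit hT)

theorem nonempty_omegaLimit_iterate (hK : IsCompact K) (horbit : ∀ᶠ n in atTop, T^[n] x₀ ∈ K) :
    (ω⁺ (fun n => T^[n]) {x₀}).Nonempty :=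
  let ⟨z, _, hz⟩ := hK.exists_mapClusterPt_of_frequently horbit.frequently
  ⟨z, (mem_omegaLimit_singleton_iff_mapClusterPt _ _ _ _).2 hz⟩

theorem tendsto_nhdsSet_omegaLimit_iterate (hK : IsCompact K)
    (horbit : ∀ᶠ n in atTop, T^[n] x₀ ∈ K) :
    Tendsto (fun n => T^[n] x₀) atTop (𝓝ˢ (ω⁺ (fun n => T^[n]) {x₀})) :=
  hK.tendsto_nhdsSet_of_mapClusterPt horbit fun _ _ hy =>
    (mem_omegaLimit_singleton_iff_mapClusterPt _ _ _ _).2 hy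

variable {Y : Type*} [TopologicalSpace Y] {V : X → Y}

theorem eq_of_mem_omegaLimit_iterate [T2Space Y] {c : Y} (hK : IsClosed K)
    (horbit : ∀ᶠ n in atTop, T^[n] x₀ ∈ K) (hV : ContinuousOn V K)
    (hc : Tendsto (fun n => V (T^[n] x₀)) atTop (𝓝 c)) :
    ∀ y ∈ ω⁺ (fun n => T^[n]) {x₀}, V y = c := fun y hy =>
  MapClusterPt.eq_of_continuousWithinAt_of_tendsto_comp
    ((mem_omegaLimit_singleton_iff_mapClusterPt _ _ _ _).1 hy) horbit
    (hV y (omegaLimit_iterate_subset hK horbit hy)) hc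

theorem exists_tendsto_apply_iterate_of_le [ConditionallyCompleteLinearOrder Y] [OrderTopology Y]
    {N : ℕ} (hK : IsCompact K) (horbit : ∀ n ≥ N, T^[n] x₀ ∈ K) (hV : ContinuousOn V K)
    (hdec : ∀ x ∈ K, V (T x) ≤ V x) :
    ∃ c, Tendsto (fun n => V (T^[n] x₀)) atTop (𝓝 c) := by
  have hanti : Antitone fun n => V (T^[n + N] x₀) := by
    refine antitone_nat_of_succ_le fun n => ?_
    rw [Nat.succ_add, Function.iterate_succ_apply']
    exact hdec _ (horbit _ (Nat.le_add_left N n))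
  have hbdd : BddBelow (range fun n => V (T^[n + N] x₀)) :=
    (hK.bddBelow_image hV).mono (range_subset_iff.2 fun n =>
      mem_image_of_mem V (horbit _ (Nat.le_add_left N n)))
  exact ⟨_, (tendsto_add_atTop_iff_nat N).1 (tendsto_atTop_ciInf hanti hbdd)⟩

end Iterate

theorem discrete_time_LaSalle_invariance_principle_extension_general
    (m : ℕ)
    (G : Set (EuclideanSpace ℝ (Fin m)))
    (T : EuclideanSpace ℝ (Fin m) → EuclideanSpace ℝ (Fin m))
    (hT : ContinuousOn T G)
    (V : EuclideanSpace ℝ (Fin m) → ℝ) (hV : ContinuousOn V G)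
    (hdec : ∀ x ∈ G, V (T x) - V x ≤ 0)
    (x₀ : EuclideanSpace ℝ (Fin m))
    (Gc : Set (EuclideanSpace ℝ (Fin m))) (hGc : Gc ⊆ G) (hGcComp : IsCompact Gc)
    (N : ℕ) (horbit : ∀ n : ℕ, N ≤ n → T^[n] x₀ ∈ Gc) :
    ∃ c : ℝ, Tendsto
      (fun n : ℕ => Metric.infDist (T^[n] x₀)
        ((⋃₀ {A : Set (EuclideanSpace ℝ (Fin m)) |
            A ⊆ {x ∈ Gc | V (T x) - V x = 0} ∧ T '' A = A}) ∩
          {x | V x = c}))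
      atTop (𝓝 0) := by
  have hev : ∀ᶠ n in atTop, T^[n] x₀ ∈ Gc := eventually_atTop.2 ⟨N, horbit⟩
  have hTc : ContinuousOn T Gc := hT.mono hGc
  have hVc : ContinuousOn V Gc := hV.mono hGc
  obtain ⟨c, hc⟩ := exists_tendsto_apply_iterate_of_le hGcComp horbit hVc
    fun x hx => sub_nonpos.1 (hdec x (hGc hx))
  have hVω := eq_of_mem_omegaLimit_iterate hGcComp.isClosed hev hVc hc
  have hωE : ω⁺ (fun n => T^[n]) {x₀} ⊆ {x ∈ Gc | V (T x) - V x = 0} := fun y hy =>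
    ⟨omegaLimit_iterate_subset hGcComp.isClosed hev hy, by
      rw [hVω _ (mapsTo_omegaLimit_iterate hGcComp.isClosed hev hTc hy), hVω y hy, sub_self]⟩
  have hTω := image_omegaLimit_iterate hGcComp hev hTc
  have hne := nonempty_omegaLimit_iterate hGcComp hev
  refine ⟨c, squeeze_zero (fun _ => infDist_nonneg)
    (fun _ => infDist_le_infDist_of_subset (fun y hy => ⟨⟨_, ⟨hωE, hTω⟩, hy⟩, hVω y hy⟩) hne)
    (tendsto_infDist_zero_of_tendsto_nhdsSet hne (tendsto_nhdsSet_omegaLimit_iterate hGcComp hev))⟩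

/-- Extension of the discrete-time LaSalle invariance principle. -/
theorem discrete_time_LaSalle_invariance_principle_extension
    (m : ℕ) (hm : 0 < m)
    (G : Set (EuclideanSpace ℝ (Fin m)))
    (T : EuclideanSpace ℝ (Fin m) → EuclideanSpace ℝ (Fin m))
    (hT : ContinuousOn T G)
    (V : EuclideanSpace ℝ (Fin m) → ℝ) (hV : ContinuousOn V G)
    (hdec : ∀ x ∈ G, V (T x) - V x ≤ 0)
    (x₀ : EuclideanSpace ℝ (Fin m)) (hx₀ : x₀ ∈ G)
    (Gc : Set (EuclideanSpace ℝ (Fin m))) (hGc : Gc ⊆ G) (hGcComp : IsCompact Gc)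
    (N : ℕ) (horbit : ∀ n : ℕ, N ≤ n → T^[n] x₀ ∈ Gc) :
    ∃ c : ℝ, Tendsto
      (fun n : ℕ => Metric.infDist (T^[n] x₀)
        ((⋃₀ {A : Set (EuclideanSpace ℝ (Fin m)) |
            A ⊆ {x ∈ Gc | V (T x) - V x = 0} ∧ T '' A = A}) ∩
          {x | V x = c}))
      atTop (𝓝 0) :=
  discrete_time_LaSalle_invariance_principle_extension_general m G T hT V hV hdec x₀ Gc hGc hGcComp
    N horbit
end
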